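/- arXiv:2301.12070 — 2 statements merged into one kernel-verified Lean document; each statement's English description precedes it below -/
import Mathlib

section
/- For every strict finitistic model W and all formulas A, B: (a) A ∧ B is valid in W iff both A and B are valid in W; (b) A ∨ B is valid in W iff A is valid in W or B is valid in W; (c) A → B is valid in W iff A → B is assertible in W. -/
/-- Propositional formulas over a countably infinite set of variables (indexed by ℕ). -/
inductive Fm : Type
  | bot : Fm
  | var : ℕ → Fm
  | and : Fm → Fm → Fm
  | or : Fm → Fm → Fm
  | imp : Fm → Fm → Fm

/-- ¬A abbreviates A → ⊥. -/
def Fm.neg (A : Fm) : Fm := Fm.imp A Fm.bot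

/-- ¬¬A. -/
def Fm.dneg (A : Fm) : Fm := (Fm.imp A Fm.bot).imp Fm.bot

/-- A strict finitistic model: a rooted tree (a partial order with minimum whose
sets of predecessors are linearly ordered), finitely branching, all of whose
branches (chains) are of at most countable length, with an upward-closed valuation
satisfying the finite verification condition and the atomic prevalence condition. -/
structure SFModel where
  K : Type
  le : K → K → Prop
  le_refl : ∀ k, le k k
  le_antisymm : ∀ k l, le k l → le l k → k = l
  le_trans : ∀ k l m, le k l → le l m → le k m
  root : K
  root_le : ∀ k, le root k
  pred_linear : ∀ k l m, le l k → le m k → le l m ∨ le m l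
  finitely_branching :
    ∀ k, {l | le k l ∧ k ≠ l ∧ ∀ m, le k m → le m l → m = k ∨ m = l}.Finite
  branches_countable :
    ∀ C : Set K, (∀ x ∈ C, ∀ y ∈ C, le x y ∨ le y x) → C.Countable
  val : ℕ → Set K
  val_up : ∀ p k l, le k l → k ∈ val p → l ∈ val p
  fin_verif : ∀ k, {p | k ∈ val p}.Finite
  atomic_prev : ∀ p, (∃ k, k ∈ val p) → ∀ l, ∃ l', le l l' ∧ l' ∈ val p

/-- Strict finitistic forcing at a node of a strict finitistic model. -/
def Force (W : SFModel) : W.K → Fm → Prop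
  | _, Fm.bot => False
  | k, Fm.var p => k ∈ W.val p
  | k, Fm.and A B => Force W k A ∧ Force W k B
  | k, Fm.or A B => Force W k A ∨ Force W k B
  | k, Fm.imp A B =>
      ∀ k', W.le k k' → Force W k' A → ∃ k'', W.le k' k'' ∧ Force W k'' B

/-- A is valid in W: every node forces A. -/
def Valid (W : SFModel) (A : Fm) : Prop := ∀ k, Force W k A

/-- A is assertible in W: some node forces A. -/
def Assertible (W : SFModel) (A : Fm) : Prop := ∃ k, Force W k A

/-- A is prevalent in W: above every node some node forces A. -/
def Prevalent (W : SFModel) (A : Fm) : Prop := ∀ k, ∃ k', W.le k k' ∧ Force W k' A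


theorem Force.mono (W : SFModel) (A : Fm) :
    ∀ k l, W.le k l → Force W k A → Force W l A := by
  induction A with
  | bot => intro k l _ h; exact h
  | var p => intro k l hkl h; exact W.val_up p k l hkl h
  | and A B ihA ihB =>
      intro k l hkl h
      exact ⟨ihA k l hkl h.1, ihB k l hkl h.2⟩
  | or A B ihA ihB =>
      intro k l hkl h
      exact h.imp (ihA k l hkl) (ihB k l hkl)
  | imp A B ihA ihB =>
      intro k l hkl h k' hk' hA
      exact h k' (W.le_trans _ _ _ hkl hk') hA

theorem assertible_prevalent (W : SFModel) (A : Fm) :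
    Assertible W A → Prevalent W A := by
  induction A with
  | bot => rintro ⟨k, h⟩; exact absurd h id
  | var p => intro h l; exact W.atomic_prev p h l
  | and A B ihA ihB =>
      rintro ⟨k, hA, hB⟩ l
      obtain ⟨l1, hl1, hA1⟩ := ihA ⟨k, hA⟩ l
      obtain ⟨l2, hl2, hB2⟩ := ihB ⟨k, hB⟩ l1
      exact ⟨l2, W.le_trans _ _ _ hl1 hl2, Force.mono W A l1 l2 hl2 hA1, hB2⟩
  | or A B ihA ihB =>
      rintro ⟨k, hAB⟩ l
      rcases hAB with hA | hB
      · obtain ⟨l', hl', h⟩ := ihA ⟨k, hA⟩ l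
        exact ⟨l', hl', Or.inl h⟩
      · obtain ⟨l', hl', h⟩ := ihB ⟨k, hB⟩ l
        exact ⟨l', hl', Or.inr h⟩
  | imp A B ihA ihB =>
      rintro ⟨k, h⟩ l
      refine ⟨l, W.le_refl l, ?_⟩
      intro k' hk' hA
      obtain ⟨a, ha, hAa⟩ := ihA ⟨k', hA⟩ k
      obtain ⟨b, hb, hBb⟩ := h a ha hAa
      exact ihB ⟨b, hBb⟩ k'

/-- validity calculus: A ∧ B is valid iff both are valid; A ∨ B is
valid iff one of them is valid; A → B is valid iff A → B is assertible. -/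
theorem validity_calculus (W : SFModel) (A B : Fm) :
    (Valid W (Fm.and A B) ↔ Valid W A ∧ Valid W B) ∧
    (Valid W (Fm.or A B) ↔ Valid W A ∨ Valid W B) ∧
    (Valid W (Fm.imp A B) ↔ Assertible W (Fm.imp A B)) := by
  refine ⟨⟨fun h => ⟨fun k => (h k).1, fun k => (h k).2⟩,
    fun h k => ⟨h.1 k, h.2 k⟩⟩, ⟨?_, ?_⟩, ?_, ?_⟩
  · intro h
    rcases h W.root with hA | hB
    · exact Or.inl fun k => Force.mono W A W.root k (W.root_le k) hA
    · exact Or.inr fun k => Force.mono W B W.root k (W.root_le k) hB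
  · rintro (h | h) k
    · exact Or.inl (h k)
    · exact Or.inr (h k)
  · intro h; exact ⟨W.root, h W.root⟩
  · rintro ⟨k, h⟩ m k' hk' hA
    obtain ⟨a, ha, hAa⟩ := assertible_prevalent W A ⟨k', hA⟩ k
    obtain ⟨b, hb, hBb⟩ := h a ha hAa
    exact assertible_prevalent W B ⟨b, hBb⟩ k'
end

section
/- For every strict finitistic model W, let cl(v) be the classical (Boolean) valuation defined by cl(v)(p) = true iff the variable p is assertible in W, extended to all formulas by the classical truth tables (with ⊥ evaluated as false). Then for every formula A, A is assertible in W if and only if cl(v)(A) = true. -/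
/-- Classical Boolean evaluation of a formula under a Boolean valuation of the
variables, with ⊥ evaluated as false. -/
def clEval (u : ℕ → Bool) : Fm → Bool
  | Fm.bot => false
  | Fm.var p => u p
  | Fm.and A B => clEval u A && clEval u B
  | Fm.or A B => clEval u A || clEval u B
  | Fm.imp A B => !(clEval u A) || clEval u B

/-- Forcing is monotone along ≤. -/
lemma force_mono (W : SFModel) : ∀ A : Fm, ∀ k l : W.K, W.le k l →
    Force W k A → Force W l A := by
  intro A
  induction A with
  | bot => intro k l _ h; exact h.elim
  | var p => intro k l hkl h; exact W.val_up p k l hkl h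
  | and A B ihA ihB =>
      intro k l hkl h
      exact ⟨ihA k l hkl h.1, ihB k l hkl h.2⟩
  | or A B ihA ihB =>
      intro k l hkl h
      cases h with
      | inl h => exact Or.inl (ihA k l hkl h)
      | inr h => exact Or.inr (ihB k l hkl h)
  | imp A B _ _ =>
      intro k l hkl h k' hk' hA
      exact h k' (W.le_trans _ _ _ hkl hk') hA

lemma main_lemma (W : SFModel) (u : ℕ → Bool)
    (hu : ∀ p, u p = true ↔ Assertible W (Fm.var p)) :
    ∀ A : Fm, (Assertible W A → clEval u A = true) ∧
      (clEval u A = true → Prevalent W A) := by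
  intro A
  induction A with
  | bot =>
      constructor
      · rintro ⟨k, hk⟩; exact hk.elim
      · intro h; simp [clEval] at h
  | var p =>
      constructor
      · intro h; exact (hu p).mpr h
      · intro h
        obtain ⟨k, hk⟩ := (hu p).mp h
        intro l
        exact W.atomic_prev p ⟨k, hk⟩ l
  | and A B ihA ihB =>
      constructor
      · rintro ⟨k, hA, hB⟩
        simp [clEval, ihA.1 ⟨k, hA⟩, ihB.1 ⟨k, hB⟩]
      · intro h
        simp [clEval] at h
        intro k
        obtain ⟨k', hk', hA⟩ := ihA.2 h.1 k
        obtain ⟨k'', hk'', hB⟩ := ihB.2 h.2 k'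
        exact ⟨k'', W.le_trans _ _ _ hk' hk'',
          ⟨force_mono W A k' k'' hk'' hA, hB⟩⟩
  | or A B ihA ihB =>
      constructor
      · rintro ⟨k, hk⟩
        cases hk with
        | inl h => simp [clEval, ihA.1 ⟨k, h⟩]
        | inr h => simp [clEval, ihB.1 ⟨k, h⟩]
      · intro h
        simp [clEval] at h
        cases h with
        | inl h =>
            intro k
            obtain ⟨k', hk', hA⟩ := ihA.2 h k
            exact ⟨k', hk', Or.inl hA⟩
        | inr h =>
            intro k
            obtain ⟨k', hk', hB⟩ := ihB.2 h k
            exact ⟨k', hk', Or.inr hB⟩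
  | imp A B ihA ihB =>
      constructor
      · rintro ⟨k, hk⟩
        simp only [clEval, Bool.or_eq_true, Bool.not_eq_true']
        by_cases hA : clEval u A = true
        · right
          obtain ⟨k', hk', hFA⟩ := ihA.2 hA k
          obtain ⟨k'', hk'', hFB⟩ := hk k' hk' hFA
          exact ihB.1 ⟨k'', hFB⟩
        · left; simpa using hA
      · intro h
        simp only [clEval, Bool.or_eq_true, Bool.not_eq_true'] at h
        intro k
        refine ⟨k, W.le_refl k, ?_⟩
        intro k' _ hFA
        cases h with
        | inl h =>
            exact absurd (ihA.1 ⟨k', hFA⟩) (by simp [h])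
        | inr h =>
            obtain ⟨k'', hk'', hFB⟩ := ihB.2 h k'
            exact ⟨k'', hk'', hFB⟩

/-- with cl(v) the Boolean valuation making a variable true exactly
when it is assertible in W, a formula is assertible in W iff its classical value
under cl(v) is true. -/
theorem assertible_iff_classical (W : SFModel) (u : ℕ → Bool)
    (hu : ∀ p, u p = true ↔ Assertible W (Fm.var p)) :
    ∀ A : Fm, Assertible W A ↔ clEval u A = true := by
  intro A
  constructor
  · exact (main_lemma W u hu A).1
  · intro h
    obtain ⟨k, hk, hF⟩ := (main_lemma W u hu A).2 h W.root
    exact ⟨k, hF⟩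
end
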